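/- (DCA sublinear rate with optimal value, regime p1.) Let f1 ∈ F_{μ1,L1} and f2 ∈ F_{μ2,L2} with L1 ≥ L2 > μ1 ≥ 0, μ2 < L2 and L1 > μ2, and assume either μ2 ≥ 0, or μ1 > −μ2 > 0 together with 1/μ1 + 1/μ2 + 1/L2 ≤ (1/L1)·(2 + L2/μ2). Let F := f1 − f2 be bounded below with F* := inf F finite. Let N ≥ 1 and let x⁰, …, x^N be a DCA sequence with subgradients g1^k ∈ ∂f1(x^k), g2^k ∈ ∂f2(x^k). Then (1/2)·min_{0 ≤ k ≤ N} ‖g1^k − g2^k‖² ≤ (F(x⁰) − F*) / (p·N + 1/(L1 − μ2)), where p = (L2 − μ1)/(L2(L1 − μ1)) + (1/L2)·(1 + μ1(L1 − L2)/(L2(L1 − μ1))). -/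

import Mathlib

/-!
Upper curvature turns a subgradient into a quadratic upper bound (the descent lemma), and
combining it with the lower bound at a second point gives the interpolation inequality. Adding the
interpolation inequalities of `f₁` and `f₂` along one DCA step, where `g₁ᵏ⁺¹ = g₂ᵏ` cancels the
linear terms, and the multiple `μ₁ (L₁ - L₂) / (L₂ (L₁ - μ₁))` of the cocoercivity inequality of
`f₂`, leaves a quadratic form in `xᵏ - xᵏ⁺¹`, `g₁ᵏ - g₂ᵏ`, `g₁ᵏ⁺¹ - g₂ᵏ⁺¹`. Whenever the regime
condition holds, it dominates `(a/2) ‖g₁ᵏ - g₂ᵏ‖² + (b/2) ‖g₁ᵏ⁺¹ - g₂ᵏ⁺¹‖²`, where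
`a = (L₂ - μ₁) / (L₂ (L₁ - μ₁))` and `b = p - a`, the gap being an explicit sum of squares.
So each step decreases `F` by at least `(p/2)` times the minimum. Telescoping, together with
`F* ≤ F(xᴺ) - ‖g₁ᴺ - g₂ᴺ‖² / (2 (L₁ - μ₂))` (a gradient step of length `1 / (L₁ - μ₂)` from
`xᴺ`), gives the rate.
-/

open RealInnerProductSpace

variable {H : Type*} [NormedAddCommGroup H] [InnerProductSpace ℝ H]

/-- `f` has lower curvature `μ`, i.e. `f - (μ/2)‖·‖²` is convex. -/
def HasLowerCurvature (μ : ℝ) (f : H → ℝ) : Prop :=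
  ConvexOn ℝ Set.univ fun x => f x - μ / 2 * ‖x‖ ^ 2

/-- `f` has upper curvature `L`, i.e. `(L/2)‖·‖² - f` is convex. -/
def HasUpperCurvature (L : ℝ) (f : H → ℝ) : Prop :=
  ConvexOn ℝ Set.univ fun x => L / 2 * ‖x‖ ^ 2 - f x

/-- `g` is a subgradient of `f` (of lower curvature `μ`) at `x`. -/
def IsSubgradient (μ : ℝ) (f : H → ℝ) (x g : H) : Prop :=
  ∀ y, f y ≥ f x + ⟪g, y - x⟫ + μ / 2 * ‖y - x‖ ^ 2

open Filter Topology in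
theorem ConvexOn.add_inner_le_of_le_add_sq {φ : H → ℝ} (hφ : ConvexOn ℝ Set.univ φ) {x a : H}
    {K : ℝ} (hK : ∀ y, φ y ≤ φ x + ⟪a, y - x⟫ + K * ‖y - x‖ ^ 2) (y : H) :
    φ x + ⟪a, y - x⟫ ≤ φ y := by
  set v := y - x
  have key : ∀ t > 0, φ x + ⟪a, v⟫ ≤ φ y + K * ‖v‖ ^ 2 * t := by
    intro t ht
    have hconv := hφ.2 (Set.mem_univ y) (Set.mem_univ (x - t • v))
      (by positivity : 0 ≤ t / (1 + t)) (by positivity : 0 ≤ 1 / (1 + t)) (by field_simp; ring)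
    -- `x` lies between `y` and `x - t • v`; the quadratic error term vanishes as `t → 0⁺`.
    have hx : (t / (1 + t)) • y + (1 / (1 + t)) • (x - t • v) = x := by
      match_scalars <;> field_simp <;> ring
    have hquad := hK (x - t • v)
    rw [hx, smul_eq_mul, smul_eq_mul] at hconv
    rw [show x - t • v - x = -(t • v) by abel, inner_neg_right, real_inner_smul_right, norm_neg,
      norm_smul, mul_pow, Real.norm_eq_abs, sq_abs] at hquad
    have h1t : 0 < 1 + t := by linarith
    have := mul_le_mul_of_nonneg_left hconv h1t.le
    rw [show (1 + t) * (t / (1 + t) * φ y + 1 / (1 + t) * φ (x - t • v))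
      = t * φ y + φ (x - t • v) by field_simp] at this
    refine le_of_mul_le_mul_left ?_ ht
    linarith
  have hlim : Tendsto (fun t => φ y + K * ‖v‖ ^ 2 * t) (𝓝[>] 0) (𝓝 (φ y)) := by
    apply tendsto_nhdsWithin_of_tendsto_nhds
    have : Continuous fun t => φ y + K * ‖v‖ ^ 2 * t := by fun_prop
    simpa using this.tendsto 0
  exact ge_of_tendsto hlim (eventually_nhdsWithin_of_forall key)

theorem IsSubgradient.le_add_inner_add_sq {μ L : ℝ} {f : H → ℝ} {x g : H}
    (hg : IsSubgradient μ f x g) (hf : HasUpperCurvature L f) (y : H) :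
    f y ≤ f x + ⟪g, y - x⟫ + L / 2 * ‖y - x‖ ^ 2 := by
  have hsq : ∀ z, ‖z‖ ^ 2 = ‖x‖ ^ 2 + 2 * ⟪x, z - x⟫ + ‖z - x‖ ^ 2 := fun z => by
    rw [← norm_add_sq_real, add_sub_cancel]
  have hquad : ∀ z, L / 2 * ‖z‖ ^ 2 - f z ≤
      (L / 2 * ‖x‖ ^ 2 - f x) + ⟪L • x - g, z - x⟫ + (L / 2 - μ / 2) * ‖z - x‖ ^ 2 := fun z => by
    have := hg z
    rw [inner_sub_left, real_inner_smul_left, hsq z]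
    linarith
  have := ConvexOn.add_inner_le_of_le_add_sq hf hquad y
  rw [inner_sub_left, real_inner_smul_left, hsq y] at this
  linarith

theorem IsSubgradient.interpolation {μ L : ℝ} (hμL : μ < L) {f : H → ℝ}
    (hf : HasUpperCurvature L f)
    {x y gx gy : H} (hx : IsSubgradient μ f x gx) (hy : IsSubgradient μ f y gy) :
    f y + ⟪gy, x - y⟫ + μ / 2 * ‖x - y‖ ^ 2 + 1 / (2 * (L - μ)) * ‖gx - gy - μ • (x - y)‖ ^ 2
      ≤ f x := by
  set t := (L - μ)⁻¹
  set w := gx - gy - μ • (x - y)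
  have ht : t * (L - μ) = 1 := inv_mul_cancel₀ (sub_ne_zero.mpr hμL.ne')
  have hw : ‖w‖ ^ 2 = ⟪gx, w⟫ - ⟪gy, w⟫ - μ * ⟪x - y, w⟫ := by
    rw [← real_inner_self_eq_norm_sq]
    simp only [w, inner_sub_left, real_inner_smul_left]
  have hd := hx.le_add_inner_add_sq hf (x - t • w)
  have hs := hy (x - t • w)
  rw [show x - t • w - x = -(t • w) by abel, inner_neg_right, real_inner_smul_right, norm_neg,
    norm_smul, mul_pow, Real.norm_eq_abs, sq_abs] at hd
  rw [show x - t • w - y = (x - y) - t • w by abel, inner_sub_right, real_inner_smul_right,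
    norm_sub_sq_real, real_inner_smul_right, norm_smul, mul_pow, Real.norm_eq_abs, sq_abs] at hs
  rw [one_div, mul_inv, ← mul_comm t]
  linear_combination hd + hs + t * hw + (t / 2 * ‖w‖ ^ 2) * ht

theorem IsSubgradient.cocoercive {μ L : ℝ} (hμL : μ < L) {f : H → ℝ}
    (hf : HasUpperCurvature L f)
    {x y gx gy : H} (hx : IsSubgradient μ f x gx) (hy : IsSubgradient μ f y gy) :
    μ * ‖x - y‖ ^ 2 + 1 / (L - μ) * ‖gx - gy - μ • (x - y)‖ ^ 2 ≤ ⟪gx - gy, x - y⟫ := by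
  have hxy := hx.interpolation hμL hf hy
  have hyx := hy.interpolation hμL hf hx
  rw [show gy - gx - μ • (y - x) = -(gx - gy - μ • (x - y)) by module, norm_neg, norm_sub_rev y x,
    ← neg_sub x y, inner_neg_right] at hyx
  rw [inner_sub_left, show 1 / (L - μ) = 2 * (1 / (2 * (L - μ))) by field_simp]
  linarith

theorem IsSubgradient.sub_le_add_inner_add_sq {μ₁ μ₂ L₁ : ℝ} {f₁ f₂ : H → ℝ}
    (hf₁ : HasUpperCurvature L₁ f₁)
    {x g₁ g₂ : H} (hg₁ : IsSubgradient μ₁ f₁ x g₁) (hg₂ : IsSubgradient μ₂ f₂ x g₂) (z : H) :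
    f₁ z - f₂ z ≤ f₁ x - f₂ x + ⟪g₁ - g₂, z - x⟫ + (L₁ - μ₂) / 2 * ‖z - x‖ ^ 2 := by
  have h₁ := hg₁.le_add_inner_add_sq hf₁ z
  have h₂ := hg₂ z
  rw [inner_sub_left]
  linarith

theorem ciInf_sub_le_of_isSubgradient {μ₁ μ₂ L₁ : ℝ} {f₁ f₂ : H → ℝ}
    (hbdd : BddBelow (Set.range fun z => f₁ z - f₂ z)) (hf₁ : HasUpperCurvature L₁ f₁)
    (hμL : μ₂ < L₁) {x g₁ g₂ : H} (hg₁ : IsSubgradient μ₁ f₁ x g₁)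
    (hg₂ : IsSubgradient μ₂ f₂ x g₂) :
    ⨅ z, (f₁ z - f₂ z) ≤ f₁ x - f₂ x - 1 / (2 * (L₁ - μ₂)) * ‖g₁ - g₂‖ ^ 2 := by
  set t := (L₁ - μ₂)⁻¹
  set d := g₁ - g₂
  have ht : t * (L₁ - μ₂) = 1 := inv_mul_cancel₀ (sub_ne_zero.mpr hμL.ne')
  have hz := hg₁.sub_le_add_inner_add_sq hf₁ hg₂ (x - t • d)
  rw [show x - t • d - x = -(t • d) by abel, inner_neg_right, real_inner_smul_right, norm_neg,
    norm_smul, mul_pow, Real.norm_eq_abs, sq_abs, real_inner_self_eq_norm_sq] at hz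
  refine (ciInf_le hbdd (x - t • d)).trans ?_
  rw [one_div, mul_inv, ← mul_comm t]
  linear_combination hz + (t / 2 * ‖d‖ ^ 2) * ht

theorem dca_step_quadratic_bound {m n L₁ L₂ : ℝ} (hm : 0 ≤ m) (hL₂ : 0 < L₂) (hmL₁ : m < L₁)
    (hnL₂ : n < L₂) (hT : 0 ≤ n * (L₁ * L₂ + 2 * m * L₁ - 3 * m * L₂) + m * (L₁ - L₂) * (L₂ - n))
    (u p q : H) :
    (L₂ - m) / (L₂ * (L₁ - m)) / 2 * ‖p‖ ^ 2
        + 1 / L₂ * (1 + m * (L₁ - L₂) / (L₂ * (L₁ - m))) / 2 * ‖q‖ ^ 2 ≤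
      (m + n) / 2 * ‖u‖ ^ 2 + 1 / (2 * (L₁ - m)) * ‖p - m • u‖ ^ 2
        + 1 / (2 * (L₂ - n)) * ‖q - n • u‖ ^ 2
        - m * (L₁ - L₂) / (L₂ * (L₁ - m))
          * (⟪q, u⟫ - n * ‖u‖ ^ 2 - 1 / (L₂ - n) * ‖q - n • u‖ ^ 2) := by
  set T := n * (L₁ * L₂ + 2 * m * L₁ - 3 * m * L₂) + m * (L₁ - L₂) * (L₂ - n)
  set U := T + m * L₂ * (L₂ - n)
  have hL₁m : 0 < L₁ - m := by linarith
  have hL₂n : 0 < L₂ - n := by linarith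
  have hmU : 0 ≤ m * L₂ * (L₂ - n) := by positivity
  rcases (add_nonneg hT hmU).eq_or_lt with hU | hU
  · have hm0 : m = 0 := by nlinarith [mul_pos hL₂ hL₂n]
    have hn0 : n = 0 := by
      simp only [hm0, T] at hU
      nlinarith [mul_pos (hmL₁.trans_le' hm) hL₂]
    subst hm0 hn0
    simp only [zero_smul, sub_zero, zero_mul, zero_div, zero_add, add_zero]
    field_simp
    exact le_refl _
  · have hcross : 0 ≤ m * T * L₂ * (L₂ - n) := by positivity
    have hsos : 0 ≤ (‖(L₂ * U) • u - (m * L₂ * (L₂ - n)) • p - T • q‖ ^ 2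
        + m * T * L₂ * (L₂ - n) * ‖p - q‖ ^ 2) / (2 * L₂ ^ 2 * (L₁ - m) * (L₂ - n) * U) := by
      positivity
    rw [← sub_nonneg]
    convert hsos using 1
    have hU₀ : U ≠ 0 := hU.ne'
    simp only [← real_inner_self_eq_norm_sq, inner_sub_left, inner_sub_right,
      real_inner_smul_left, real_inner_smul_right, real_inner_comm u, real_inner_comm p q]
    field_simp
    simp only [U, T]
    ring

theorem dca_step_decrease {μ₁ μ₂ L₁ L₂ : ℝ} (hL : L₂ ≤ L₁) (hμ₁ : 0 ≤ μ₁) (hμ₁L₂ : μ₁ < L₂)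
    (hμ₂L₂ : μ₂ < L₂)
    (hT : 0 ≤ μ₂ * (L₁ * L₂ + 2 * μ₁ * L₁ - 3 * μ₁ * L₂) + μ₁ * (L₁ - L₂) * (L₂ - μ₂))
    {f₁ f₂ : H → ℝ} (hf₁ : HasUpperCurvature L₁ f₁) (hf₂ : HasUpperCurvature L₂ f₂)
    {x x' g₁ g₁' g₂ g₂' : H} (hg₁ : IsSubgradient μ₁ f₁ x g₁) (hg₁' : IsSubgradient μ₁ f₁ x' g₁')
    (hg₂ : IsSubgradient μ₂ f₂ x g₂) (hg₂' : IsSubgradient μ₂ f₂ x' g₂') (hdca : g₁' = g₂) :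
    (L₂ - μ₁) / (L₂ * (L₁ - μ₁)) / 2 * ‖g₁ - g₂‖ ^ 2
        + 1 / L₂ * (1 + μ₁ * (L₁ - L₂) / (L₂ * (L₁ - μ₁))) / 2 * ‖g₁' - g₂'‖ ^ 2 ≤
      (f₁ x - f₂ x) - (f₁ x' - f₂ x') := by
  subst hdca
  have hL₂ : 0 < L₂ := hμ₁.trans_lt hμ₁L₂
  have hμ₁L₁ : μ₁ < L₁ := hμ₁L₂.trans_le hL
  have hF₁ := hg₁.interpolation hμ₁L₁ hf₁ hg₁'
  have hF₂ := hg₂'.interpolation hμ₂L₂ hf₂ hg₂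
  have hco := hg₂.cocoercive hμ₂L₂ hf₂ hg₂'
  rw [show g₂' - g₁' - μ₂ • (x' - x) = -(g₁' - g₂' - μ₂ • (x - x')) by module, norm_neg,
    norm_sub_rev x' x, ← neg_sub x x', inner_neg_right] at hF₂
  have hρ : 0 ≤ μ₁ * (L₁ - L₂) / (L₂ * (L₁ - μ₁)) :=
    div_nonneg (mul_nonneg hμ₁ (sub_nonneg.mpr hL)) (mul_pos hL₂ (sub_pos.mpr hμ₁L₁)).le
  have hQ := dca_step_quadratic_bound hμ₁ hL₂ hμ₁L₁ hμ₂L₂ hT (x - x') (g₁ - g₁') (g₁' - g₂')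
  linarith [mul_nonneg hρ (sub_nonneg.mpr hco)]

theorem dca_regime_nonneg {μ₁ μ₂ L₁ L₂ : ℝ} (hL : L₂ ≤ L₁) (hμ₁ : 0 ≤ μ₁) (hμ₁L₂ : μ₁ < L₂)
    (hμ₂L₂ : μ₂ < L₂)
    (hreg : 0 ≤ μ₂ ∨
      (-μ₂ < μ₁ ∧ 0 < -μ₂ ∧ 1 / μ₁ + 1 / μ₂ + 1 / L₂ ≤ (1 / L₁) * (2 + L₂ / μ₂))) :
    0 ≤ μ₂ * (L₁ * L₂ + 2 * μ₁ * L₁ - 3 * μ₁ * L₂) + μ₁ * (L₁ - L₂) * (L₂ - μ₂) := by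
  have hL₂ : 0 < L₂ := hμ₁.trans_lt hμ₁L₂
  have hL₁ : 0 < L₁ := hL₂.trans_le hL
  have hgap : 0 ≤ μ₁ * (L₁ - L₂) := mul_nonneg hμ₁ (sub_nonneg.mpr hL)
  rcases hreg with hμ₂ | ⟨hμ₂μ₁, hμ₂, hineq⟩
  · have : 0 ≤ L₁ * L₂ + 2 * μ₁ * L₁ - 3 * μ₁ * L₂ := by nlinarith
    have : 0 ≤ L₂ - μ₂ := by linarith
    positivity
  · have hμ₁ : 0 < μ₁ := by linarith
    have hμ₂ : μ₂ ≠ 0 := by linarith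
    have hscale : (1 / μ₁ + 1 / μ₂ + 1 / L₂ - 1 / L₁ * (2 + L₂ / μ₂)) * (μ₁ * μ₂ * L₁ * L₂)
        = μ₂ * (L₁ * L₂ + 2 * μ₁ * L₁ - 3 * μ₁ * L₂) + μ₁ * (L₁ - L₂) * (L₂ - μ₂) := by
      field_simp
      ring
    rw [← hscale]
    refine mul_nonneg_of_nonpos_of_nonpos (by linarith) ?_
    have : 0 < μ₁ * L₁ * L₂ := by positivity
    nlinarith

theorem nat_mul_le_sub_of_le_sub_succ {a : ℕ → ℝ} {c : ℝ} {N : ℕ}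
    (h : ∀ k < N, c ≤ a k - a (k + 1)) : N * c ≤ a 0 - a N := by
  induction N with
  | zero => simp
  | succ N ih =>
    have hN := h N N.lt_succ_self
    have := ih fun k hk => h k (hk.trans N.lt_succ_self)
    push_cast
    linarith

theorem dca_rate_p1_opt_general
    (mu1 mu2 L1 L2 : ℝ)
    (h1 : L2 ≤ L1) (h2 : mu1 < L2) (h3 : 0 ≤ mu1) (h4 : mu2 < L2)
    (hreg : 0 ≤ mu2 ∨
      (-mu2 < mu1 ∧ 0 < -mu2 ∧
        1 / mu1 + 1 / mu2 + 1 / L2 ≤ (1 / L1) * (2 + L2 / mu2)))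
    (f1 f2 : H → ℝ)
    (h1up : HasUpperCurvature L1 f1)
    (h2up : HasUpperCurvature L2 f2)
    (hbdd : BddBelow (Set.range fun z : H => f1 z - f2 z))
    (N : ℕ) (x g1 g2 : ℕ → H)
    (hg1 : ∀ k ≤ N, IsSubgradient mu1 f1 (x k) (g1 k))
    (hg2 : ∀ k ≤ N, IsSubgradient mu2 f2 (x k) (g2 k))
    (hdca : ∀ k < N, g1 (k + 1) = g2 k) :
    ((1 : ℝ) / 2) * ((Finset.range (N + 1)).inf' (Finset.nonempty_range_iff.mpr (Nat.succ_ne_zero N))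
        fun k => ‖g1 k - g2 k‖ ^ 2) ≤
      ((f1 (x 0) - f2 (x 0)) - ⨅ z : H, (f1 z - f2 z)) /
        (((L2 - mu1) / (L2 * (L1 - mu1)) +
          (1 / L2) * (1 + mu1 * (L1 - L2) / (L2 * (L1 - mu1)))) * N + 1 / (L1 - mu2)) := by
  set m := (Finset.range (N + 1)).inf' _ fun k => ‖g1 k - g2 k‖ ^ 2
  set a := (L2 - mu1) / (L2 * (L1 - mu1))
  set b := 1 / L2 * (1 + mu1 * (L1 - L2) / (L2 * (L1 - mu1)))
  have hm : ∀ k ≤ N, m ≤ ‖g1 k - g2 k‖ ^ 2 := fun k hk =>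
    Finset.inf'_le _ (Finset.mem_range.mpr (Nat.lt_succ_of_le hk))
  have hL2 : 0 < L2 := h3.trans_lt h2
  have hL1mu1 : 0 < L1 - mu1 := by linarith
  have hL1mu2 : 0 < L1 - mu2 := by linarith
  have ha : 0 ≤ a := div_nonneg (by linarith) (by positivity)
  have hb : 0 ≤ b := by
    have : 0 ≤ mu1 * (L1 - L2) := mul_nonneg h3 (by linarith)
    positivity
  have hstep : ∀ k < N,
      (a + b) / 2 * m ≤ (f1 (x k) - f2 (x k)) - (f1 (x (k + 1)) - f2 (x (k + 1))) :=
    fun k hk => by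
      have := dca_step_decrease h1 h3 h2 h4 (dca_regime_nonneg h1 h3 h2 h4 hreg) h1up h2up
        (hg1 k hk.le) (hg1 (k + 1) hk) (hg2 k hk.le) (hg2 (k + 1) hk) (hdca k hk)
      linarith [mul_le_mul_of_nonneg_left (hm k hk.le) ha,
        mul_le_mul_of_nonneg_left (hm (k + 1) hk) hb]
  have hsum := nat_mul_le_sub_of_le_sub_succ (a := fun k => f1 (x k) - f2 (x k)) hstep
  have hlast :=
    ciInf_sub_le_of_isSubgradient hbdd h1up (h4.trans_le h1) (hg1 N le_rfl) (hg2 N le_rfl)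
  have hmN := mul_le_mul_of_nonneg_left (hm N le_rfl) (by positivity : 0 ≤ 1 / (2 * (L1 - mu2)))
  have hhalf : 1 / (2 * (L1 - mu2)) = 1 / (L1 - mu2) / 2 := by field_simp
  rw [le_div_iff₀ (by positivity)]
  linear_combination hsum + hlast + hmN - m * hhalf

/-- DCA sublinear rate with optimal value, regime p1. -/
theorem dca_rate_p1_opt
    (mu1 mu2 L1 L2 : ℝ)
    (h1 : L2 ≤ L1) (h2 : mu1 < L2) (h3 : 0 ≤ mu1) (h4 : mu2 < L2) (h5 : mu2 < L1)
    (hreg : 0 ≤ mu2 ∨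
      (-mu2 < mu1 ∧ 0 < -mu2 ∧
        1 / mu1 + 1 / mu2 + 1 / L2 ≤ (1 / L1) * (2 + L2 / mu2)))
    (f1 f2 : H → ℝ)
    (h1lo : HasLowerCurvature mu1 f1) (h1up : HasUpperCurvature L1 f1)
    (h2lo : HasLowerCurvature mu2 f2) (h2up : HasUpperCurvature L2 f2)
    (hbdd : BddBelow (Set.range fun z : H => f1 z - f2 z))
    (N : ℕ) (hN : 1 ≤ N) (x g1 g2 : ℕ → H)
    (hg1 : ∀ k ≤ N, IsSubgradient mu1 f1 (x k) (g1 k))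
    (hg2 : ∀ k ≤ N, IsSubgradient mu2 f2 (x k) (g2 k))
    (hdca : ∀ k < N, g1 (k + 1) = g2 k) :
    ((1 : ℝ) / 2) * ((Finset.range (N + 1)).inf' (Finset.nonempty_range_iff.mpr (Nat.succ_ne_zero N))
        fun k => ‖g1 k - g2 k‖ ^ 2) ≤
      ((f1 (x 0) - f2 (x 0)) - ⨅ z : H, (f1 z - f2 z)) /
        (((L2 - mu1) / (L2 * (L1 - mu1)) +
          (1 / L2) * (1 + mu1 * (L1 - L2) / (L2 * (L1 - mu1)))) * N + 1 / (L1 - mu2)) :=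
  dca_rate_p1_opt_general mu1 mu2 L1 L2 h1 h2 h3 h4 hreg f1 f2 h1up h2up hbdd N x g1 g2 hg1 hg2 hdca
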